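/- arXiv:2209.08638 — 5 statements merged into one kernel-verified Lean document; each statement's English description precedes it below -/
import Mathlib

section
/- Let F1, ..., Ft be finite graphs and let S({F1,...,Ft}) denote the smallest family of graphs containing F1,...,Ft (up to isomorphism) that is closed under substitutions. If F ∈ S({F1,...,Ft}) and P is a prime induced subgraph of F, then P is an induced subgraph of some Fi. -/
def Subst {V1 V2 : Type} (G1 : SimpleGraph V1) (G2 : SimpleGraph V2) (v : V1) :
    SimpleGraph ({u : V1 // u ≠ v} ⊕ V2) where
  Adj x y :=
    match x, y with
    | Sum.inl u, Sum.inl u' => G1.Adj u.1 u'.1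
    | Sum.inl u, Sum.inr _ => G1.Adj u.1 v
    | Sum.inr _, Sum.inl u => G1.Adj u.1 v
    | Sum.inr w, Sum.inr w' => G2.Adj w w'
  symm := by
    constructor
    rintro (u | w) (u' | w') h
    · exact G1.adj_symm h
    · exact h
    · exact h
    · exact G2.adj_symm h
  loopless := by
    constructor
    rintro (u | w) h
    · exact G1.irrefl h
    · exact G2.irrefl h

structure FinGraph : Type 1 where
  V : Type
  finV : Finite V
  G : SimpleGraph V

attribute [instance] FinGraph.finV

def FinGraph.subst (A B : FinGraph) (v : A.V) : FinGraph :=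
  ⟨{u : A.V // u ≠ v} ⊕ B.V, inferInstance, Subst A.G B.G v⟩

def FinGraph.induce (A : FinGraph) (s : Set A.V) : FinGraph :=
  ⟨↥s, inferInstance, SimpleGraph.induce s A.G⟩

def ClosedIso (F : FinGraph → Prop) : Prop :=
  ∀ A B : FinGraph, F A → Nonempty (A.G ≃g B.G) → F B

def ClosedSubst (F : FinGraph → Prop) : Prop :=
  ∀ (A B : FinGraph) (v : A.V), F A → F B → F (A.subst B v)

def ClosedInduced (F : FinGraph → Prop) : Prop :=
  ∀ (A : FinGraph) (s : Set A.V), F A → F (A.induce s)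

def IsPrime (A : FinGraph) : Prop :=
  ¬ ∃ (B C : FinGraph) (v : B.V),
      Nat.card B.V < Nat.card A.V ∧ Nat.card C.V < Nat.card A.V ∧
      Nonempty (A.G ≃g (B.subst C v).G)

def SClosure (P : FinGraph → Prop) (A : FinGraph) : Prop :=
  ∀ F : FinGraph → Prop, ClosedSubst F → ClosedIso F → (∀ B, P B → F B) → F A

/-!
Substitution closure is the least family closed under substitution and isomorphism, so it
suffices that the graphs all of whose prime induced subgraphs embed in some `Fᵢ` form such a
family. If a prime graph `P` embeds in `G₁^{v → G₂}`, the vertices landing in `G₂` form a module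
of `P`. A module `M ∋ m` exhibits `P` as `P[(V ∖ M) ∪ {m}]^{m → P[M]}`, a proper decomposition
unless `M` is trivial; so either at most one vertex lands in `G₂`, and collapsing it to `v`
embeds `P` in `G₁`, or all of them do, and `P` embeds in `G₂`.
-/

namespace SimpleGraph

variable {V V1 V2 : Type}

def IsModule (G : SimpleGraph V) (M : Set V) : Prop :=
  ∀ x ∉ M, ∀ y ∈ M, ∀ z ∈ M, G.Adj x y ↔ G.Adj x z

def substProj (v : V1) : {u : V1 // u ≠ v} ⊕ V2 → V1 :=
  Sum.elim Subtype.val fun _ => v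

theorem substProj_eq_substProj_iff {v : V1} {x y : {u : V1 // u ≠ v} ⊕ V2} :
    substProj v x = substProj v y ↔ x = y ∨ (x.isRight ∧ y.isRight) := by
  rcases x with u | w <;> rcases y with u' | w'
  · simp [substProj, Subtype.ext_iff]
  · simpa [substProj] using u.2
  · simpa [substProj, eq_comm] using u'.2
  · simp [substProj]

theorem subst_adj_iff_substProj {G1 : SimpleGraph V1} {G2 : SimpleGraph V2} {v : V1}
    {x y : {u : V1 // u ≠ v} ⊕ V2} (h : ¬ (x.isRight ∧ y.isRight)) :
    (Subst G1 G2 v).Adj x y ↔ G1.Adj (substProj v x) (substProj v y) := by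
  rcases x with u | w <;> rcases y with u' | w'
  · rfl
  · rfl
  · exact G1.adj_comm _ _
  · simp at h

theorem isModule_preimage_isRight {G : SimpleGraph V} {G1 : SimpleGraph V1}
    {G2 : SimpleGraph V2} {v : V1} (f : G ↪g Subst G1 G2 v) :
    G.IsModule {p | (f p).isRight} := by
  intro x hx y hy z hz
  obtain ⟨u, hu⟩ := Sum.isLeft_iff.mp (Sum.not_isRight.mp hx)
  obtain ⟨w, hw⟩ := Sum.isRight_iff.mp hy
  obtain ⟨w', hw'⟩ := Sum.isRight_iff.mp hz
  rw [← f.map_rel_iff, ← f.map_rel_iff, hu, hw, hw']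
  rfl

namespace Embedding

variable {G : SimpleGraph V} {G1 : SimpleGraph V1} {G2 : SimpleGraph V2} {v : V1}

def substProj (f : G ↪g Subst G1 G2 v) (hf : {p | (f p).isRight}.Subsingleton) : G ↪g G1 where
  toFun p := SimpleGraph.substProj v (f p)
  inj' p q hpq := by
    rcases substProj_eq_substProj_iff.mp hpq with h | ⟨hp, hq⟩
    · exact f.injective h
    · exact hf hp hq
  map_rel_iff' {p q} := by
    by_cases h : (f p).isRight ∧ (f q).isRight
    · obtain rfl := hf h.1 h.2
      exact iff_of_false G1.irrefl G.irrefl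
    · exact (subst_adj_iff_substProj h).symm.trans f.map_rel_iff

def substRight (f : G ↪g Subst G1 G2 v) (hf : ∀ p, (f p).isRight) : G ↪g G2 where
  toFun p := (f p).getRight (hf p)
  inj' p q hpq := f.injective <|
    calc f p = Sum.inr ((f p).getRight (hf p)) := (Sum.inr_getRight _ _).symm
      _ = Sum.inr ((f q).getRight (hf q)) := congrArg Sum.inr hpq
      _ = f q := Sum.inr_getRight _ _
  map_rel_iff' {p q} := by
    have h := f.map_rel_iff (a := p) (b := q)
    rwa [← Sum.inr_getRight (f p) (hf p), ← Sum.inr_getRight (f q) (hf q)] at h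

end Embedding

open Classical in
noncomputable def IsModule.isoSubst {G : SimpleGraph V} {M : Set V} (hM : G.IsModule M) {m : V}
    (hm : m ∈ M) :
    G ≃g Subst (G.induce (insert m Mᶜ)) (G.induce M) ⟨m, Set.mem_insert m _⟩ where
  toFun x := if h : x ∈ M then Sum.inr ⟨x, h⟩ else
    Sum.inl ⟨⟨x, Or.inr h⟩, fun e => by obtain rfl : x = m := congrArg Subtype.val e; exact h hm⟩
  invFun := Sum.elim (fun u => u.1.1) Subtype.val
  left_inv x := by
    by_cases h : x ∈ M <;> simp [h]
  right_inv := by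
    rintro (⟨⟨x, hx⟩, hxm⟩ | ⟨x, hx⟩)
    · have : x ∉ M := by
        rcases hx with rfl | hx
        · exact absurd rfl hxm
        · exact hx
      simp [this]
    · simp [hx]
  map_rel_iff' {x y} := by
    simp only [Equiv.coe_fn_mk]
    by_cases hx : x ∈ M <;> by_cases hy : y ∈ M <;> simp only [hx, hy, dite_true, dite_false]
    · rfl
    · exact (hM y hy x hx m hm).symm.trans (G.adj_comm y x)
    · exact (hM x hx y hy m hm).symm
    · rfl

end SimpleGraph

theorem not_isPrime_of_isModule {A : FinGraph} {M : Set A.V} (hM : A.G.IsModule M)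
    {m m' x : A.V} (hm : m ∈ M) (hm' : m' ∈ M) (hmm' : m ≠ m') (hx : x ∉ M) : ¬ IsPrime A :=
  fun hA => hA ⟨A.induce (insert m Mᶜ), A.induce M, ⟨m, Set.mem_insert m _⟩,
    Finite.card_subtype_lt (x := m') (by simpa [hmm'.symm] using hm'),
    Finite.card_subtype_lt hx, ⟨hM.isoSubst hm⟩⟩

theorem IsPrime.nonempty_embedding_of_embedding_subst {P A B : FinGraph} {v : A.V}
    (hP : IsPrime P) (f : P.G ↪g (A.subst B v).G) :
    Nonempty (P.G ↪g A.G) ∨ Nonempty (P.G ↪g B.G) := by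
  by_cases hS : {p | (f p).isRight}.Subsingleton
  · exact Or.inl ⟨f.substProj hS⟩
  by_cases hall : ∀ p, (f p).isRight
  · exact Or.inr ⟨f.substRight hall⟩
  obtain ⟨m, hm, m', hm', hmm'⟩ := Set.not_subsingleton_iff.mp hS
  obtain ⟨x, hx⟩ := not_forall.mp hall
  exact absurd hP <|
    not_isPrime_of_isModule (SimpleGraph.isModule_preimage_isRight f) hm hm' hmm' hx

/-- a prime induced subgraph of a member of the substitution closure of
finitely many graphs is an induced subgraph of one of them. -/
theorem stmt3 (t : ℕ) (Fs : Fin t → FinGraph) (A : FinGraph)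
    (hA : SClosure (fun B => ∃ i, Nonempty (B.G ≃g (Fs i).G)) A)
    (P : FinGraph) (hP : IsPrime P) (emb : P.G ↪g A.G) :
    ∃ i, Nonempty (P.G ↪g (Fs i).G) := by
  refine hA (fun C => ∀ Q : FinGraph, IsPrime Q → Nonempty (Q.G ↪g C.G) →
      ∃ i, Nonempty (Q.G ↪g (Fs i).G)) ?_ ?_ ?_ P hP ⟨emb⟩
  · intro C D v hC hD Q hQ ⟨g⟩
    exact (hQ.nonempty_embedding_of_embedding_subst g).elim (hC Q hQ) (hD Q hQ)
  · rintro C D hC ⟨e⟩ Q hQ ⟨g⟩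
    exact hC Q hQ ⟨e.symm.toEmbedding.comp g⟩
  · rintro C ⟨i, ⟨e⟩⟩ Q hQ ⟨g⟩
    exact ⟨i, ⟨e.toEmbedding.comp g⟩⟩
end

section
/- For n ≥ 6, let G_n be the graph obtained from the path P_n with vertex set {1,...,n} (edges {i,i+1}) by adding four vertices a, b, c, d and edges {a,b}, {c,d}, {a,2}, {b,3}, {c,n−2}, {d,n−1}. Then for all 6 ≤ n < m, the graph G_n is not isomorphic to an induced subgraph of G_m; i.e., {G_n : n ≥ 6} is an infinite antichain in the induced-subgraph order. -/
/-!
The path vertices `1, 2, n - 3, n - 2` (0-based) are exactly the vertices of `Gn n` with three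
distinct neighbours, so an injective homomorphism `f : Gn n →g Gn m` maps them to such vertices
of `Gn m`. Those form two adjacent pairs, `{1, 2}` and `{m - 3, m - 2}`, at path distance `m - 5`.
In `Gn n` the vertices `1`, `2` are adjacent and `2`, `n - 3` are at distance `n - 5 < m - 5`;
since `f` does not increase distances (measured by the 1-Lipschitz `pathIndex`), the three
distinct vertices `f 1, f 2, f (n - 3)` would all lie in one pair.
-/

/-- The graph `G_n` from the paper: the path on vertices `1, …, n` (here `Fin n`,
0-based) together with four extra vertices `a, b, c, d` (here `Fin 4`: `0 ↦ a`,
`1 ↦ b`, `2 ↦ c`, `3 ↦ d`) and edges `{a,b}, {c,d}, {a,2}, {b,3}, {c,n-2}, {d,n-1}`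
(paper's 1-based labels). -/
def Gn (n : ℕ) : SimpleGraph (Fin n ⊕ Fin 4) :=
  SimpleGraph.fromRel fun x y =>
    match x, y with
    | Sum.inl i, Sum.inl j => (i : ℕ) + 1 = (j : ℕ)
    | Sum.inr a, Sum.inr b => (a = 0 ∧ b = 1) ∨ (a = 2 ∧ b = 3)
    | Sum.inr a, Sum.inl i => (a = 0 ∧ (i : ℕ) = 1) ∨ (a = 1 ∧ (i : ℕ) = 2) ∨
        (a = 2 ∧ (i : ℕ) = n - 3) ∨ (a = 3 ∧ (i : ℕ) = n - 2)
    | Sum.inl _, Sum.inr _ => False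

open SimpleGraph

theorem SimpleGraph.pathGraph_abs_sub_le {n : ℕ} {φ : Fin n → ℤ}
    (hφ : ∀ ⦃i j⦄, (pathGraph n).Adj i j → |φ i - φ j| ≤ 1) {i j : Fin n} (hij : i ≤ j) :
    |φ i - φ j| ≤ (j : ℤ) - i := by
  obtain ⟨i, hi⟩ := i
  obtain ⟨j, hj⟩ := j
  rw [Fin.mk_le_mk] at hij
  induction j, hij using Nat.le_induction with
  | base => simp
  | succ k _ ih =>
    have hk : k < n := by omega
    have hstep := hφ (i := ⟨k, hk⟩) (j := ⟨k + 1, hj⟩) (by simp [pathGraph_adj])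
    calc |φ ⟨i, hi⟩ - φ ⟨k + 1, hj⟩| ≤ |φ ⟨i, hi⟩ - φ ⟨k, hk⟩| + |φ ⟨k, hk⟩ - φ ⟨k + 1, hj⟩| :=
          abs_sub_le _ _ _
      _ ≤ ((k + 1 : ℕ) : ℤ) - i := by push_cast; linarith [ih hk]

namespace Gn

variable {m : ℕ}

def pathHom (m : ℕ) : pathGraph m →g Gn m where
  toFun := Sum.inl
  map_rel' h := by simp [Gn, pathGraph_adj] at h ⊢; omega

/-- Pendant vertices get the index of the path vertex they hang from. -/
def pathIndex : Fin m ⊕ Fin 4 → ℕ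
  | Sum.inl i => i
  | Sum.inr a => ![1, 2, m - 3, m - 2] a

theorem abs_pathIndex_sub_le_one {x y : Fin m ⊕ Fin 4} (h : (Gn m).Adj x y) :
    |(pathIndex x : ℤ) - pathIndex y| ≤ 1 := by
  rw [abs_le]
  rcases x with ⟨i, hi⟩ | a <;> rcases y with ⟨j, hj⟩ | b
  · simp [Gn, pathIndex] at h ⊢; omega
  · fin_cases b <;> simp [Gn, pathIndex] at h ⊢ <;> omega
  · fin_cases a <;> simp [Gn, pathIndex] at h ⊢ <;> omega
  · fin_cases a <;> fin_cases b <;> simp [Gn, pathIndex] at h ⊢ <;> omega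

def IsBranch (v : Fin m ⊕ Fin 4) : Prop :=
  ∃ k : Fin m, v = Sum.inl k ∧ ((k : ℕ) = 1 ∨ (k : ℕ) = 2 ∨ (k : ℕ) = m - 3 ∨ (k : ℕ) = m - 2)

theorem exists_adj_subset_pair (hm : 3 ≤ m) {v : Fin m ⊕ Fin 4} (hv : ¬ IsBranch v) :
    ∃ p q, ∀ x, (Gn m).Adj v x → x = p ∨ x = q := by
  rcases v with ⟨k, hk⟩ | a
  · refine ⟨Sum.inl ⟨k - 1, by omega⟩, Sum.inl ⟨min (k + 1) (m - 1), by omega⟩, ?_⟩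
    simp only [IsBranch, Sum.inl.injEq, exists_eq_left'] at hv
    rintro (⟨j, hj⟩ | b) h
    · simp [Gn] at h ⊢; omega
    · fin_cases b <;> simp [Gn] at h <;> omega
  · refine ⟨Sum.inr (![1, 0, 3, 2] a), Sum.inl ⟨pathIndex (m := m) (Sum.inr a), ?_⟩, ?_⟩
    · fin_cases a <;> simp [pathIndex] <;> omega
    rintro (⟨j, hj⟩ | b) h
    · fin_cases a <;> simp [Gn, pathIndex] at h ⊢ <;> omega
    · fin_cases a <;> fin_cases b <;> simp [Gn] at h ⊢

theorem isBranch_iff_exists_three_adj (hm : 4 ≤ m) {v : Fin m ⊕ Fin 4} :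
    IsBranch v ↔ ∃ x y z, (Gn m).Adj v x ∧ (Gn m).Adj v y ∧ (Gn m).Adj v z ∧
      x ≠ y ∧ x ≠ z ∧ y ≠ z := by
  constructor
  · rintro ⟨⟨k, hk⟩, rfl, hk'⟩
    obtain ⟨a, ha⟩ : ∃ a : Fin 4, (Gn m).Adj (Sum.inl ⟨k, hk⟩) (Sum.inr a) := by
      rcases hk' with rfl | rfl | rfl | rfl
      exacts [⟨0, by simp [Gn]⟩, ⟨1, by simp [Gn]⟩, ⟨2, by simp [Gn]⟩, ⟨3, by simp [Gn]⟩]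
    simp only at hk'
    refine ⟨Sum.inl ⟨k - 1, by omega⟩, Sum.inl ⟨k + 1, by omega⟩, Sum.inr a, ?_, ?_, ha, ?_, ?_, ?_⟩
    all_goals simp [Gn] <;> omega
  · rintro ⟨x, y, z, hx, hy, hz, hxy, hxz, hyz⟩
    by_contra hv
    obtain ⟨p, q, hpq⟩ := exists_adj_subset_pair (by omega) hv
    rcases hpq x hx with rfl | rfl <;> rcases hpq y hy with rfl | rfl <;>
      rcases hpq z hz with rfl | rfl <;> simp_all

theorem isBranch_map {n : ℕ} (hn : 4 ≤ n) (hm : 4 ≤ m) (f : Gn n →g Gn m)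
    (hf : Function.Injective f) {v : Fin n ⊕ Fin 4} (hv : IsBranch v) : IsBranch (f v) := by
  obtain ⟨x, y, z, hx, hy, hz, hxy, hxz, hyz⟩ := (isBranch_iff_exists_three_adj hn).1 hv
  exact (isBranch_iff_exists_three_adj hm).2
    ⟨f x, f y, f z, f.map_adj hx, f.map_adj hy, f.map_adj hz, hf.ne hxy, hf.ne hxz, hf.ne hyz⟩

theorem hom_not_injective {n : ℕ} (hn : 6 ≤ n) (hm : n < m) (f : Gn n →g Gn m) :
    ¬ Function.Injective f := by
  intro hf
  have hbranch (k : ℕ) (hk : k < n) (hk' : k = 1 ∨ k = 2 ∨ k = n - 3) :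
      IsBranch (f (Sum.inl ⟨k, hk⟩)) :=
    isBranch_map (by omega) (by omega) f hf ⟨⟨k, hk⟩, rfl, by dsimp only; omega⟩
  obtain ⟨k₁, e₁, hk₁⟩ := hbranch 1 (by omega) (by omega)
  obtain ⟨k₂, e₂, hk₂⟩ := hbranch 2 (by omega) (by omega)
  obtain ⟨k₃, e₃, hk₃⟩ := hbranch (n - 3) (by omega) (by omega)
  have hdist {i j : Fin n} (hij : i ≤ j) :
      |(pathIndex (f (Sum.inl i)) : ℤ) - pathIndex (f (Sum.inl j))| ≤ (j : ℤ) - i :=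
    pathGraph_abs_sub_le
      (fun _ _ h => abs_pathIndex_sub_le_one (f.map_adj ((pathHom n).map_adj h))) hij
  have h₁₂ := hdist (i := ⟨1, by omega⟩) (j := ⟨2, by omega⟩) (by simp [Fin.le_def])
  have h₂₃ := hdist (i := ⟨2, by omega⟩) (j := ⟨n - 3, by omega⟩) (by simp [Fin.le_def]; omega)
  have hne {i j : Fin n} (hij : i ≠ j) : f (Sum.inl i) ≠ f (Sum.inl j) :=
    hf.ne (Sum.inl_injective.ne hij)
  have hne₁₂ := hne (i := ⟨1, by omega⟩) (j := ⟨2, by omega⟩) (by simp)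
  have hne₁₃ := hne (i := ⟨1, by omega⟩) (j := ⟨n - 3, by omega⟩) (by simp; omega)
  have hne₂₃ := hne (i := ⟨2, by omega⟩) (j := ⟨n - 3, by omega⟩) (by simp; omega)
  simp only [e₁, e₂, e₃, pathIndex, abs_le, ne_eq, Sum.inl.injEq, Fin.ext_iff]
    at h₁₂ h₂₃ hne₁₂ hne₁₃ hne₂₃
  omega

end Gn

/-- the graphs `G_n`, `n ≥ 6`, form an infinite antichain in the
induced-subgraph order. -/
theorem stmt8 (n m : ℕ) (hn : 6 ≤ n) (hm : n < m) :
    ¬ Nonempty (Gn n ↪g Gn m) := fun ⟨f⟩ => Gn.hom_not_injective hn hm f.toHom f.injective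
end

section
/- Let G be a nontrivial finite graph and let n ≥ 3 with n ≤ VC'(G). Suppose t ∈ ℕ satisfies ∑_{i=0}^{t−1} binom(n,i) < (2^n − 2)/n. Then VC(G) ≥ t. -/
/-!
Fix an almost shattered set `U` of size `n`. Every nonempty proper `A ⊆ U` has a witness `v`
with `N(v) ∩ U = A \ {v}`, so `A = insert x B` for the trace `B = N(v) ∩ U` and some `x ∈ U`.
Hence at least `(2^n - 2)/n` distinct traces `N(v) ∩ U` occur, and by the Sauer–Shelah lemma
this family of subsets of `U` shatters a set of size `t`, which is then shattered by
neighborhoods.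
-/

/-- The VC dimension of (neighborhoods of) a graph: the largest size of a set of
vertices shattered by vertex neighborhoods. -/
noncomputable def VCdim {V : Type} (G : SimpleGraph V) : ℕ :=
  sSup {n | ∃ U : Set V, (∀ A ⊆ U, ∃ v, G.neighborSet v ∩ U = A) ∧ U.ncard = n}

/-- The VC' dimension of a graph: the largest size of a set of vertices almost
shattered by vertex neighborhoods. -/
noncomputable def VCdim' {V : Type} (G : SimpleGraph V) : ℕ :=
  sSup {n | ∃ U : Set V,
    (∀ A : Set V, A ⊆ U → A ≠ ∅ → A ≠ U → ∃ v, G.neighborSet v ∩ U = A \ {v}) ∧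
    U.ncard = n}

open Finset

theorem Finset.exists_shatters_card_eq_of_sum_choose_lt {α : Type*} [DecidableEq α]
    {𝒜 : Finset (Finset α)} {U : Finset α} {t : ℕ} (h𝒜 : ∀ s ∈ 𝒜, s ⊆ U)
    (h : ∑ i ∈ range t, (#U).choose i < #𝒜) : ∃ s, 𝒜.Shatters s ∧ #s = t := by
  by_contra! hno
  have hsmall : 𝒜.shatterer ⊆ (range t).biUnion fun i ↦ U.powersetCard i := by
    intro s hs
    replace hs := mem_shatterer.1 hs
    obtain ⟨u, hu, hsu⟩ := hs.exists_superset
    have hst : #s < t := by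
      by_contra! hts
      obtain ⟨s', hs's, hs'⟩ := exists_subset_card_eq hts
      exact hno s' (hs.mono_right hs's) hs'
    simpa [mem_powersetCard] using ⟨hst, hsu.trans (h𝒜 u hu)⟩
  have := (card_le_card_shatterer 𝒜).trans ((card_le_card hsmall).trans card_biUnion_le)
  simp only [card_powersetCard] at this
  omega

theorem Set.bddAbove_setOf_exists_ncard_eq {α : Type*} [Finite α] (P : Set α → Prop) :
    BddAbove {n | ∃ U, P U ∧ U.ncard = n} :=
  ⟨Nat.card α, by rintro _ ⟨U, -, rfl⟩; exact Set.ncard_le_card U⟩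

theorem Nat.lt_of_cast_lt_two_pow_sub_two_div {s c n : ℕ}
    (hs : (s : ℝ) < ((2 : ℝ) ^ n - 2) / n) (hc : 2 ^ n ≤ c * n + 2) : s < c := by
  rcases Nat.eq_zero_or_pos n with rfl | hn
  · -- `x / 0 = 0`, so `hs` is impossible
    exact absurd hs (by simp)
  have hc' : (2 : ℝ) ^ n - 2 ≤ c * n := by
    have := (Nat.cast_le (α := ℝ)).2 hc
    push_cast at this
    linarith
  rw [lt_div_iff₀ (by exact_mod_cast hn)] at hs
  exact_mod_cast lt_of_mul_lt_mul_right (hs.trans_le hc') (Nat.cast_nonneg n)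

namespace SimpleGraph

variable {V : Type} (G : SimpleGraph V)

def IsNbhdShattered (U : Set V) : Prop :=
  ∀ A ⊆ U, ∃ v, G.neighborSet v ∩ U = A

def IsNbhdAlmostShattered (U : Set V) : Prop :=
  ∀ A : Set V, A ⊆ U → A ≠ ∅ → A ≠ U → ∃ v, G.neighborSet v ∩ U = A \ {v}

variable {G}

theorem IsNbhdAlmostShattered.mono {U W : Set V} (hW : G.IsNbhdAlmostShattered W)
    (hUW : U ⊆ W) : G.IsNbhdAlmostShattered U := by
  intro A hAU hA hAU'
  obtain ⟨v, hv⟩ := hW A (hAU.trans hUW) hA fun hAW ↦ hAU' (hAU.antisymm (hAW ▸ hUW))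
  refine ⟨v, ?_⟩
  rw [← Set.inter_eq_self_of_subset_right hUW, ← Set.inter_assoc, hv,
    Set.inter_eq_self_of_subset_left (Set.sdiff_subset.trans hAU)]

theorem IsNbhdShattered.ncard_le_VCdim [Finite V] {U : Set V} (hU : G.IsNbhdShattered U) :
    U.ncard ≤ VCdim G :=
  le_csSup (Set.bddAbove_setOf_exists_ncard_eq _) ⟨U, hU, rfl⟩

theorem exists_isNbhdAlmostShattered_card_eq [Finite V] {n : ℕ} (hn : n ≤ VCdim' G) :
    ∃ U : Finset V, G.IsNbhdAlmostShattered U ∧ #U = n := by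
  have hne : {n | ∃ U, G.IsNbhdAlmostShattered U ∧ U.ncard = n}.Nonempty :=
    ⟨0, ∅, fun _ hA hA₀ _ ↦ absurd (Set.subset_empty_iff.1 hA) hA₀, Set.ncard_empty _⟩
  obtain ⟨W, hW, hWcard⟩ := Nat.sSup_mem hne (Set.bddAbove_setOf_exists_ncard_eq _)
  obtain ⟨U, hUW, hUcard⟩ := Set.exists_subset_card_eq (s := W) (n := n) (hWcard ▸ hn)
  obtain ⟨U, rfl⟩ := (Set.toFinite U).exists_finset_coe
  exact ⟨U, hW.mono hUW, by simpa using hUcard⟩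

theorem coe_filter_adj [DecidableRel G.Adj] (U : Finset V) (v : V) :
    (U.filter (G.Adj v) : Set V) = G.neighborSet v ∩ U := by
  ext
  simp [and_comm]

variable [Fintype V] [DecidableEq V] [DecidableRel G.Adj]

variable (G) in
def nbhdTraces (U : Finset V) : Finset (Finset V) :=
  univ.image fun v ↦ U.filter (G.Adj v)

theorem subset_of_mem_nbhdTraces {U B : Finset V} (hB : B ∈ G.nbhdTraces U) : B ⊆ U := by
  obtain ⟨v, -, rfl⟩ := mem_image.1 hB
  exact filter_subset _ _

theorem isNbhdShattered_of_shatters {U S : Finset V} (hS : (G.nbhdTraces U).Shatters S) :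
    G.IsNbhdShattered S := by
  intro A hA
  obtain ⟨A, rfl⟩ := (S.finite_toSet.subset hA).exists_finset_coe
  obtain ⟨B, hB, hSB⟩ := hS (coe_subset.1 hA)
  obtain ⟨v, -, rfl⟩ := mem_image.1 hB
  obtain ⟨_, hu, hSu⟩ := hS.exists_superset
  have hSU : S ⊆ U := hSu.trans (subset_of_mem_nbhdTraces hu)
  refine ⟨v, ?_⟩
  rw [← hSB, coe_inter, coe_filter_adj, Set.inter_left_comm,
    Set.inter_eq_left.2 (coe_subset.2 hSU)]

theorem exists_eq_insert_of_isNbhdAlmostShattered {U A : Finset V}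
    (hU : G.IsNbhdAlmostShattered U) (hAU : A ⊆ U) (hA : A.Nonempty) (hAU' : A ≠ U) :
    ∃ B ∈ G.nbhdTraces U, ∃ x ∈ U, insert x B = A := by
  obtain ⟨v, hv⟩ := hU A (coe_subset.2 hAU) (by simpa using hA.ne_empty) (by exact_mod_cast hAU')
  have htrace : U.filter (G.Adj v) = A.erase v := by
    rw [← coe_inj, coe_filter_adj, hv, coe_erase]
  refine ⟨A.erase v, htrace ▸ mem_image_of_mem _ (mem_univ v), ?_⟩
  by_cases hvA : v ∈ A
  · exact ⟨v, hAU hvA, insert_erase hvA⟩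
  · obtain ⟨x, hx⟩ := hA
    exact ⟨x, hAU hx, by rw [erase_eq_of_notMem hvA, insert_eq_of_mem hx]⟩

theorem two_pow_card_le_card_nbhdTraces_mul {U : Finset V} (hU : G.IsNbhdAlmostShattered U) :
    2 ^ #U ≤ #(G.nbhdTraces U) * #U + 2 := by
  have hcover :
      U.powerset ⊆ ((G.nbhdTraces U ×ˢ U).image fun p ↦ insert p.2 p.1) ∪ {∅, U} := by
    intro A hA
    by_cases hA' : A.Nonempty ∧ A ≠ U
    · obtain ⟨B, hB, x, hx, rfl⟩ :=
        exists_eq_insert_of_isNbhdAlmostShattered hU (mem_powerset.1 hA) hA'.1 hA'.2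
      exact mem_union_left _ (mem_image.2 ⟨(B, x), mem_product.2 ⟨hB, hx⟩, rfl⟩)
    · rw [not_and_or, not_nonempty_iff_eq_empty, not_ne_iff] at hA'
      exact mem_union_right _ (by simpa using hA')
  calc 2 ^ #U = #U.powerset := (card_powerset U).symm
    _ ≤ #((G.nbhdTraces U ×ˢ U).image fun p ↦ insert p.2 p.1) + #{∅, U} :=
      (card_le_card hcover).trans (card_union_le _ _)
    _ ≤ #(G.nbhdTraces U) * #U + 2 :=
      add_le_add (card_image_le.trans (card_product _ _).le) card_le_two

end SimpleGraph

open SimpleGraph in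
theorem stmt13_general {V : Type} [Fintype V] (G : SimpleGraph V) (n t : ℕ)
    (hn' : n ≤ VCdim' G)
    (ht : (∑ i ∈ Finset.range t, (n.choose i : ℝ)) < ((2 : ℝ) ^ n - 2) / n) :
    t ≤ VCdim G := by
  classical
  obtain ⟨U, hU, rfl⟩ := exists_isNbhdAlmostShattered_card_eq hn'
  have hlt : ∑ i ∈ range t, (#U).choose i < #(G.nbhdTraces U) :=
    Nat.lt_of_cast_lt_two_pow_sub_two_div (by exact_mod_cast ht)
      (two_pow_card_le_card_nbhdTraces_mul hU)
  obtain ⟨S, hS, rfl⟩ :=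
    exists_shatters_card_eq_of_sum_choose_lt (fun _ ↦ subset_of_mem_nbhdTraces) hlt
  simpa using (isNbhdShattered_of_shatters hS).ncard_le_VCdim

/-- if `3 ≤ n ≤ VC'(G)` and `∑_{i<t} C(n,i) < (2^n - 2)/n` then `VC(G) ≥ t`. -/
theorem stmt13 {V : Type} [Fintype V] [Nonempty V] (G : SimpleGraph V) (n t : ℕ)
    (hn : 3 ≤ n) (hn' : n ≤ VCdim' G)
    (ht : (∑ i ∈ Finset.range t, (n.choose i : ℝ)) < ((2 : ℝ) ^ n - 2) / n) :
    t ≤ VCdim G :=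
  stmt13_general G n t hn' ht
end

section
/- For every n ∈ ℕ and every graphon W (symmetric measurable function on the square of a probability space with values in [0,1]), the sum of the induced densities of the complete graph K_n and the empty graph on n vertices in W is at least binom(R(n,n), n)^{-1}, where R(n,n) is the diagonal Ramsey number. -/
open MeasureTheory

/-- The diagonal Ramsey number `R(n,n)`: the least `N` such that every graph on `N`
vertices contains a clique or an independent set of size `n`. -/
noncomputable def ramsey (n : ℕ) : ℕ :=
  sInf {N | ∀ G : SimpleGraph (Fin N), ∃ s : Finset (Fin N), s.card = n ∧
    ((∀ i ∈ s, ∀ j ∈ s, i ≠ j → G.Adj i j) ∨ (∀ i ∈ s, ∀ j ∈ s, ¬ G.Adj i j))}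

/-!
Let `N = R(n,n)` and sample `x : Fin N → Ω` from `μ^N`. Given `x`, declare each pair `i < j` an
edge independently with probability `W (x i) (x j)`. The random graph always contains a clique or
an independent set of size `n`, so by the union bound over the `C(N,n)` vertex sets `s`,
`1 ≤ ∑ₛ (P(s is a clique) + P(s is independent))`, and these probabilities are the products of
`W` resp. `1 - W` over the pairs of `s`. Integrating over `x`, each summand becomes the clique plus
independent-set density of `W` on `n` vertices, because any `n` coordinates of an i.i.d. sample
are again i.i.d.
-/

open Finset

section Bernoulli

variable {ι : Type*} [DecidableEq ι] {P Q : Finset ι} {f g : ι → ℝ}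

theorem sum_powerset_filter_disjoint_prod_mul_prod_sdiff (hQP : Q ⊆ P)
    (hfg : ∀ i ∈ P, f i + g i = 1) :
    ∑ t ∈ P.powerset with Disjoint t Q, (∏ i ∈ t, f i) * ∏ i ∈ P \ t, g i =
      ∏ i ∈ Q, g i := by
  -- Zeroing `f` on `Q` kills exactly the terms of the expansion of `∏ i ∈ P, (f' i + g i)` that
  -- have `t ∩ Q ≠ ∅`.
  set f' : ι → ℝ := fun i => if i ∈ Q then 0 else f i
  have hterm : ∀ t, (if Disjoint t Q then (∏ i ∈ t, f i) * ∏ i ∈ P \ t, g i else 0) =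
      (∏ i ∈ t, f' i) * ∏ i ∈ P \ t, g i := by
    intro t
    split_ifs with ht
    · rw [prod_congr rfl fun i hi => if_neg (disjoint_left.mp ht hi)]
    · obtain ⟨i, hit, hiQ⟩ := not_disjoint_iff.mp ht
      rw [prod_eq_zero hit (by simp [f', hiQ]), zero_mul]
  calc _ = ∑ t ∈ P.powerset, (∏ i ∈ t, f' i) * ∏ i ∈ P \ t, g i := by
        rw [sum_filter]; exact sum_congr rfl fun t _ => hterm t
    _ = ∏ i ∈ P, (f' i + g i) := (prod_add _ _ _).symm
    _ = ∏ i ∈ P, if i ∈ Q then g i else 1 :=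
        prod_congr rfl fun i hi => by by_cases hiQ : i ∈ Q <;> simp [f', hiQ, hfg i hi]
    _ = ∏ i ∈ Q, g i := by rw [prod_ite_mem, inter_eq_right.mpr hQP]

theorem sum_powerset_filter_superset_prod_mul_prod_sdiff (hQP : Q ⊆ P)
    (hfg : ∀ i ∈ P, f i + g i = 1) :
    ∑ t ∈ P.powerset with Q ⊆ t, (∏ i ∈ t, f i) * ∏ i ∈ P \ t, g i =
      ∏ i ∈ Q, f i := by
  -- Dually, zeroing `g` on `Q` kills the terms with `Q ⊄ t`.
  set g' : ι → ℝ := fun i => if i ∈ Q then 0 else g i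
  have hterm : ∀ t, (if Q ⊆ t then (∏ i ∈ t, f i) * ∏ i ∈ P \ t, g i else 0) =
      (∏ i ∈ t, f i) * ∏ i ∈ P \ t, g' i := by
    intro t
    split_ifs with ht
    · rw [prod_congr rfl fun i hi => if_neg fun hiQ => (mem_sdiff.mp hi).2 (ht hiQ)]
    · obtain ⟨i, hiQ, hit⟩ := not_subset.mp ht
      rw [prod_eq_zero (mem_sdiff.mpr ⟨hQP hiQ, hit⟩) (by simp [g', hiQ]), mul_zero]
  calc _ = ∑ t ∈ P.powerset, (∏ i ∈ t, f i) * ∏ i ∈ P \ t, g' i := by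
        rw [sum_filter]; exact sum_congr rfl fun t _ => hterm t
    _ = ∏ i ∈ P, (f i + g' i) := (prod_add _ _ _).symm
    _ = ∏ i ∈ P, if i ∈ Q then f i else 1 :=
        prod_congr rfl fun i hi => by by_cases hiQ : i ∈ Q <;> simp [g', hiQ, hfg i hi]
    _ = ∏ i ∈ Q, f i := by rw [prod_ite_mem, inter_eq_right.mpr hQP]

theorem one_le_sum_prod_add_prod_of_forall_subset_or_disjoint {κ : Type*} {S : Finset κ}
    {Q : κ → Finset ι} (hQP : ∀ k ∈ S, Q k ⊆ P) (hf : ∀ i ∈ P, 0 ≤ f i)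
    (hg : ∀ i ∈ P, 0 ≤ g i) (hfg : ∀ i ∈ P, f i + g i = 1)
    (hcover : ∀ t ⊆ P, ∃ k ∈ S, Q k ⊆ t ∨ Disjoint t (Q k)) :
    1 ≤ ∑ k ∈ S, (∏ i ∈ Q k, f i + ∏ i ∈ Q k, g i) := by
  -- `w t` is the probability that a random subset of `P`, containing each `i` independently with
  -- probability `f i`, equals `t`.
  set w : Finset ι → ℝ := fun t => (∏ i ∈ t, f i) * ∏ i ∈ P \ t, g i
  have hw : ∀ t ⊆ P, 0 ≤ w t := fun t ht =>
    mul_nonneg (prod_nonneg fun i hi => hf i (ht hi))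
      (prod_nonneg fun i hi => hg i (mem_sdiff.mp hi).1)
  have hcount : ∀ t ∈ P.powerset, w t ≤
      ∑ k ∈ S, ((if Q k ⊆ t then w t else 0) + if Disjoint t (Q k) then w t else 0) := by
    intro t ht
    have hwt := hw t (mem_powerset.mp ht)
    obtain ⟨k, hk, hkt⟩ := hcover t (mem_powerset.mp ht)
    have hind : ∀ p : Prop, [Decidable p] → 0 ≤ if p then w t else 0 :=
      fun _ _ => ite_nonneg hwt le_rfl
    refine le_trans ?_ (single_le_sum (fun k _ => add_nonneg (hind _) (hind _)) hk)
    rcases hkt with h | h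
    · rw [if_pos h]; exact le_add_of_nonneg_right (hind _)
    · rw [if_pos h]; exact le_add_of_nonneg_left (hind _)
  calc (1 : ℝ) = ∏ i ∈ P, (f i + g i) := (prod_eq_one hfg).symm
    _ = ∑ t ∈ P.powerset, w t := prod_add _ _ _
    _ ≤ ∑ t ∈ P.powerset, ∑ k ∈ S,
          ((if Q k ⊆ t then w t else 0) + if Disjoint t (Q k) then w t else 0) :=
        sum_le_sum hcount
    _ = ∑ k ∈ S, (∏ i ∈ Q k, f i + ∏ i ∈ Q k, g i) := by
        rw [sum_comm]
        refine sum_congr rfl fun k hk => ?_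
        rw [sum_add_distrib, ← sum_filter, ← sum_filter,
          sum_powerset_filter_superset_prod_mul_prod_sdiff (hQP k hk) hfg,
          sum_powerset_filter_disjoint_prod_mul_prod_sdiff (hQP k hk) hfg]

end Bernoulli

section Pairs

variable {α β : Type*} [LinearOrder α] [LinearOrder β]

def ltPairs (s : Finset α) : Finset (α × α) := {p ∈ s ×ˢ s | p.1 < p.2}

theorem ltPairs_univ [Fintype α] :
    ltPairs (univ : Finset α) = univ.filter fun p : α × α => p.1 < p.2 := by
  simp [ltPairs]

theorem ltPairs_mono {s t : Finset α} (hst : s ⊆ t) : ltPairs s ⊆ ltPairs t :=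
  filter_subset_filter _ (product_subset_product hst hst)

theorem map_ltPairs (g : α ↪o β) (s : Finset α) :
    (ltPairs s).map (g.toEmbedding.prodMap g.toEmbedding) = ltPairs (s.map g.toEmbedding) := by
  ext ⟨a, b⟩
  simp only [ltPairs, mem_map, mem_filter, mem_product, Function.Embedding.coe_prodMap,
    Prod.map, Prod.mk.injEq, RelEmbedding.coe_toEmbedding]
  constructor
  · rintro ⟨⟨a', b'⟩, ⟨⟨ha, hb⟩, hlt⟩, rfl, rfl⟩
    exact ⟨⟨⟨a', ha, rfl⟩, ⟨b', hb, rfl⟩⟩, g.lt_iff_lt.mpr hlt⟩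
  · rintro ⟨⟨⟨a', ha, rfl⟩, ⟨b', hb, rfl⟩⟩, hlt⟩
    exact ⟨(a', b'), ⟨⟨ha, hb⟩, g.lt_iff_lt.mp hlt⟩, rfl, rfl⟩

end Pairs

theorem measurePreserving_precomp_of_injective {ι ι' X : Type*} [Fintype ι] [Fintype ι']
    [MeasurableSpace X] (μ : Measure X) [IsProbabilityMeasure μ] {g : ι' → ι}
    (hg : Function.Injective g) :
    MeasurePreserving (fun x : ι → X => x ∘ g) (Measure.pi fun _ => μ)
      (Measure.pi fun _ => μ) := by
  classical
  refine ⟨by fun_prop, (Measure.pi_eq fun s hs => ?_).symm⟩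
  have hpre : (fun x : ι → X => x ∘ g) ⁻¹' Set.univ.pi s =
      Set.univ.pi (Function.extend g s fun _ => Set.univ) := by
    ext x
    simp only [Set.mem_preimage, Set.mem_univ_pi, Function.comp_apply]
    refine ⟨fun hx j => ?_, fun hx i => by simpa [hg.extend_apply] using hx (g i)⟩
    by_cases hj : ∃ i, g i = j
    · obtain ⟨i, rfl⟩ := hj
      simpa [hg.extend_apply] using hx i
    · simp [Function.extend_apply' _ _ _ hj]
  rw [Measure.map_apply (by fun_prop) (.univ_pi hs), hpre, Measure.pi_pi]
  refine (Fintype.prod_of_injective g hg _ _ (fun j hj => ?_) fun i => ?_).symm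
  · simp [Function.extend_apply' _ _ _ (by simpa using hj)]
  · simp [hg.extend_apply]

section PairProd

variable {α β Ω : Type*} [LinearOrder α] [LinearOrder β] {F : Ω → Ω → ℝ}

def pairProd (F : Ω → Ω → ℝ) (s : Finset α) (x : α → Ω) : ℝ :=
  ∏ p ∈ ltPairs s, F (x p.1) (x p.2)

theorem pairProd_map (g : α ↪o β) (F : Ω → Ω → ℝ) (s : Finset α) (x : β → Ω) :
    pairProd F (s.map g.toEmbedding) x = pairProd F s (x ∘ g) := by
  rw [pairProd, ← map_ltPairs, prod_map]
  rfl

theorem pairProd_mem_Icc (hF : ∀ a b, F a b ∈ Set.Icc 0 1) (s : Finset α) (x : α → Ω) :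
    pairProd F s x ∈ Set.Icc 0 1 :=
  ⟨prod_nonneg fun _ _ => (hF _ _).1, prod_le_one (fun _ _ => (hF _ _).1) fun _ _ => (hF _ _).2⟩

variable [MeasurableSpace Ω]

theorem measurable_pairProd (hF : Measurable (Function.uncurry F)) (s : Finset α) :
    Measurable (pairProd F s) :=
  Finset.measurable_prod _ fun p _ =>
    show Measurable (Function.uncurry F ∘ fun x : α → Ω => (x p.1, x p.2)) by fun_prop

theorem integrable_pairProd [Fintype α] {ν : Measure (α → Ω)} [IsFiniteMeasure ν]
    (hF : Measurable (Function.uncurry F)) (hF01 : ∀ a b, F a b ∈ Set.Icc 0 1) (s : Finset α) :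
    Integrable (pairProd F s) ν :=
  .of_bound (measurable_pairProd hF s).aestronglyMeasurable 1 <| .of_forall fun x => by
    rw [Real.norm_of_nonneg (pairProd_mem_Icc hF01 s x).1]
    exact (pairProd_mem_Icc hF01 s x).2

theorem integral_pairProd_map [Fintype α] [Fintype β] (μ : Measure Ω) [IsProbabilityMeasure μ]
    (hF : Measurable (Function.uncurry F)) (g : α ↪o β) (s : Finset α) :
    ∫ x, pairProd F (s.map g.toEmbedding) x ∂Measure.pi (fun _ : β => μ) =
      ∫ y, pairProd F s y ∂Measure.pi (fun _ : α => μ) := by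
  have hg := measurePreserving_precomp_of_injective μ g.injective
  simp_rw [pairProd_map]
  rw [← hg.map_eq, integral_map hg.measurable.aemeasurable
    (measurable_pairProd hF s).aestronglyMeasurable]

end PairProd

def RamseyArrows (N n : ℕ) : Prop :=
  ∀ G : SimpleGraph (Fin N), ∃ s : Finset (Fin N), s.card = n ∧
    ((∀ i ∈ s, ∀ j ∈ s, i ≠ j → G.Adj i j) ∨ (∀ i ∈ s, ∀ j ∈ s, ¬ G.Adj i j))

-- Ramsey's theorem is not needed: were `{N | RamseyArrows N n}` empty, `ramsey n = sInf ∅ = 0`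
-- and the binomial coefficient would vanish for `n > 0`.
theorem ramseyArrows_ramsey {n : ℕ} (h : (ramsey n).choose n ≠ 0) :
    RamseyArrows (ramsey n) n := by
  rcases Nat.eq_zero_or_pos n with rfl | hn
  · exact fun _ => ⟨∅, card_empty, .inr (by simp)⟩
  exact Nat.sInf_mem (Nat.nonempty_of_pos_sInf (hn.trans_le (Nat.choose_ne_zero_iff.mp h)))

theorem RamseyArrows.exists_ltPairs_subset_or_disjoint {N n : ℕ} (h : RamseyArrows N n)
    (t : Finset (Fin N × Fin N)) :
    ∃ s : Finset (Fin N), s.card = n ∧ (ltPairs s ⊆ t ∨ Disjoint t (ltPairs s)) := by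
  set G := SimpleGraph.fromRel fun i j : Fin N => i < j ∧ (i, j) ∈ t
  have hadj : ∀ p ∈ ltPairs univ, G.Adj p.1 p.2 ↔ p ∈ t := by
    intro p hp
    have hlt : p.1 < p.2 := (mem_filter.mp hp).2
    simp [G, hlt, hlt.ne, hlt.not_gt]
  obtain ⟨s, hs, hhom⟩ := h G
  refine ⟨s, hs, hhom.imp (fun hclique p hp => ?_) fun hindep =>
    disjoint_left.mpr fun p hpt hp => ?_⟩
  all_goals
    obtain ⟨⟨h1, h2⟩, hlt⟩ : (p.1 ∈ s ∧ p.2 ∈ s) ∧ p.1 < p.2 := by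
      simpa [ltPairs] using hp
    have hpu : p ∈ ltPairs univ := ltPairs_mono (subset_univ s) hp
  · exact (hadj p hpu).mp (hclique _ h1 _ h2 hlt.ne)
  · exact hindep _ h1 _ h2 ((hadj p hpu).mpr hpt)

theorem one_le_choose_mul_integral_pairProd_add {Ω : Type*} [MeasurableSpace Ω] (μ : Measure Ω)
    [IsProbabilityMeasure μ] {W : Ω → Ω → ℝ} (hmeas : Measurable (Function.uncurry W))
    (hrange : ∀ x y, W x y ∈ Set.Icc (0 : ℝ) 1) {N n : ℕ} (hR : RamseyArrows N n) :
    1 ≤ N.choose n * (∫ y, pairProd W univ y ∂Measure.pi (fun _ : Fin n => μ) +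
      ∫ y, pairProd (fun a b => 1 - W a b) univ y ∂Measure.pi (fun _ : Fin n => μ)) := by
  set W' : Ω → Ω → ℝ := fun a b => 1 - W a b
  have hmeas' : Measurable (Function.uncurry W') := measurable_const.sub hmeas
  have hrange' : ∀ x y, W' x y ∈ Set.Icc (0 : ℝ) 1 := fun x y =>
    ⟨sub_nonneg.mpr (hrange x y).2, sub_le_self 1 (hrange x y).1⟩
  set S := (univ : Finset (Fin N)).powersetCard n
  have hint : ∀ s, Integrable (fun x => pairProd W s x + pairProd W' s x)
      (Measure.pi fun _ : Fin N => μ) := fun s =>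
    (integrable_pairProd hmeas hrange s).add (integrable_pairProd hmeas' hrange' s)
  have hpointwise : ∀ x : Fin N → Ω, 1 ≤ ∑ s ∈ S, (pairProd W s x + pairProd W' s x) :=
    fun x => one_le_sum_prod_add_prod_of_forall_subset_or_disjoint
      (fun s _ => ltPairs_mono (subset_univ s)) (fun _ _ => (hrange _ _).1)
      (fun _ _ => (hrange' _ _).1) (fun _ _ => add_sub_cancel _ _) fun t _ =>
        let ⟨s, hs, h⟩ := hR.exists_ltPairs_subset_or_disjoint t
        ⟨s, mem_powersetCard_univ.mpr hs, h⟩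
  have hterm : ∀ s ∈ S, ∫ x, (pairProd W s x + pairProd W' s x) ∂Measure.pi (fun _ => μ) =
      ∫ y, pairProd W univ y ∂Measure.pi (fun _ : Fin n => μ) +
        ∫ y, pairProd W' univ y ∂Measure.pi (fun _ : Fin n => μ) := by
    intro s hs
    obtain ⟨-, hcard⟩ := mem_powersetCard.mp hs
    rw [integral_add (integrable_pairProd hmeas hrange s) (integrable_pairProd hmeas' hrange' s),
      ← map_orderEmbOfFin_univ s hcard, integral_pairProd_map μ hmeas,
      integral_pairProd_map μ hmeas']
  calc (1 : ℝ) = ∫ _, 1 ∂Measure.pi (fun _ : Fin N => μ) := by simp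
    _ ≤ ∫ x, ∑ s ∈ S, (pairProd W s x + pairProd W' s x) ∂Measure.pi (fun _ => μ) :=
        integral_mono (integrable_const 1) (integrable_finsetSum _ fun s _ => hint s) hpointwise
    _ = _ := by
        rw [integral_finsetSum _ fun s _ => hint s, sum_congr rfl hterm, sum_const,
          card_powersetCard, card_univ, Fintype.card_fin, nsmul_eq_mul]

theorem stmt16_general {Ω : Type} [MeasurableSpace Ω] (μ : Measure Ω) [IsProbabilityMeasure μ]
    (W : Ω → Ω → ℝ)
    (hmeas : Measurable (Function.uncurry W))
    (hrange : ∀ x y, W x y ∈ Set.Icc (0 : ℝ) 1) (n : ℕ) :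
    (1 : ℝ) / ((ramsey n).choose n) ≤
      (∫ x : Fin n → Ω,
        ∏ p ∈ Finset.univ.filter (fun p : Fin n × Fin n => p.1 < p.2),
          W (x p.1) (x p.2) ∂(Measure.pi fun _ => μ)) +
      (∫ x : Fin n → Ω,
        ∏ p ∈ Finset.univ.filter (fun p : Fin n × Fin n => p.1 < p.2),
          (1 - W (x p.1) (x p.2)) ∂(Measure.pi fun _ => μ)) := by
  rcases eq_or_ne ((ramsey n).choose n) 0 with h | h
  · rw [h, Nat.cast_zero, div_zero]
    exact add_nonneg (integral_nonneg fun x => prod_nonneg fun _ _ => (hrange _ _).1)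
      (integral_nonneg fun x => prod_nonneg fun _ _ => sub_nonneg.mpr (hrange _ _).2)
  rw [div_le_iff₀' (by positivity)]
  simpa only [pairProd, ltPairs_univ] using
    one_le_choose_mul_integral_pairProd_add μ hmeas hrange (ramseyArrows_ramsey h)

/-- for every graphon `W`, the densities of the clique and the empty
graph on `n` vertices sum to at least `C(R(n,n), n)⁻¹`. -/
theorem stmt16 {Ω : Type} [MeasurableSpace Ω] (μ : Measure Ω) [IsProbabilityMeasure μ]
    (W : Ω → Ω → ℝ) (hsymm : ∀ x y, W x y = W y x)
    (hmeas : Measurable (Function.uncurry W))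
    (hrange : ∀ x y, W x y ∈ Set.Icc (0 : ℝ) 1) (n : ℕ) :
    (1 : ℝ) / ((ramsey n).choose n) ≤
      (∫ x : Fin n → Ω,
        ∏ p ∈ Finset.univ.filter (fun p : Fin n × Fin n => p.1 < p.2),
          W (x p.1) (x p.2) ∂(Measure.pi fun _ => μ)) +
      (∫ x : Fin n → Ω,
        ∏ p ∈ Finset.univ.filter (fun p : Fin n × Fin n => p.1 < p.2),
          (1 - W (x p.1) (x p.2)) ∂(Measure.pi fun _ => μ)) :=
  stmt16_general μ W hmeas hrange n
end

section
/- For odd n ≥ 9, let G'_n be the graph on vertex set {1,...,n} ∪ {a,b} with edges {i,i+1} for 1 ≤ i ≤ n−1, edges {a,4} and {b,n−3}, and edges {2i,2j} for all distinct i,j ∈ {1,...,(n−1)/2}. Then for all odd 9 ≤ n < m, G'_n is not isomorphic to an induced subgraph of G'_m; i.e., {G'_n : n ≥ 9 odd} is an infinite antichain in the induced-subgraph partial order. -/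
/-!
For odd `m`, both pendants of `G' m` hang on the clique of odd (0-based) path vertices, so a vertex
with three distinct neighbours lies on that clique, and an even path vertex sees only its two path
neighbours. An embedding `G' n ↪g G' m` therefore maps odd vertices to odd vertices, and the even
vertex between two consecutive odd vertices to an even path vertex, so consecutive odd vertices
land exactly 2 apart. Hence the images of the attachment vertices `3` and `n - 4` are at most
`n - 7` apart. But the pendants force these images to be the attachment vertices `3` and `m - 4`
of `G' m`, which are `m - 7 > n - 7` apart.
-/

/-- The graph `G'_n` (for odd `n ≥ 9`): the path on `1, …, n` (here `Fin n`, 0-based)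
with the even-labeled (1-based) vertices joined into a clique, plus two vertices `a, b`
(here `Fin 2`) with `a` adjacent to vertex `4` and `b` adjacent to vertex `n-3`
(paper's 1-based labels). -/
def G' (n : ℕ) : SimpleGraph (Fin n ⊕ Fin 2) :=
  SimpleGraph.fromRel fun x y =>
    match x, y with
    | Sum.inl i, Sum.inl j =>
        ((i : ℕ) + 1 = (j : ℕ)) ∨ ((i : ℕ) % 2 = 1 ∧ (j : ℕ) % 2 = 1)
    | Sum.inr a, Sum.inl i => (a = 0 ∧ (i : ℕ) = 3) ∨ (a = 1 ∧ (i : ℕ) = n - 4)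
    | _, _ => False

namespace G'

variable {m : ℕ}

@[simp]
lemma adj_inl_inl {i j : Fin m} :
    (G' m).Adj (.inl i) (.inl j) ↔
      (i : ℕ) ≠ j ∧
        (((i : ℕ) + 1 = j ∨ (j : ℕ) + 1 = i) ∨ ((i : ℕ) % 2 = 1 ∧ (j : ℕ) % 2 = 1)) := by
  rw [G', SimpleGraph.fromRel_adj]
  simp only [ne_eq, Sum.inl.injEq, Fin.ext_iff]
  tauto

@[simp]
lemma adj_inr_inl {a : Fin 2} {i : Fin m} :
    (G' m).Adj (.inr a) (.inl i) ↔ (a = 0 ∧ (i : ℕ) = 3) ∨ (a = 1 ∧ (i : ℕ) = m - 4) := by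
  rw [G', SimpleGraph.fromRel_adj]
  simp

@[simp]
lemma adj_inl_inr {a : Fin 2} {i : Fin m} :
    (G' m).Adj (.inl i) (.inr a) ↔ (a = 0 ∧ (i : ℕ) = 3) ∨ (a = 1 ∧ (i : ℕ) = m - 4) := by
  rw [SimpleGraph.adj_comm, adj_inr_inl]

@[simp]
lemma not_adj_inr_inr {a b : Fin 2} : ¬ (G' m).Adj (.inr a) (.inr b) := by
  rw [G', SimpleGraph.fromRel_adj]
  simp

lemma adj_inl_of_odd {i j : Fin m} (hij : i ≠ j) (hi : (i : ℕ) % 2 = 1) (hj : (j : ℕ) % 2 = 1) :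
    (G' m).Adj (.inl i) (.inl j) :=
  adj_inl_inl.2 ⟨Fin.val_ne_of_ne hij, .inr ⟨hi, hj⟩⟩

lemma eq_of_adj_inr {a : Fin 2} {y z : Fin m ⊕ Fin 2}
    (hy : (G' m).Adj (.inr a) y) (hz : (G' m).Adj (.inr a) z) : y = z := by
  rcases y with i | b <;> rcases z with j | c <;> simp only [adj_inr_inl, not_adj_inr_inr] at hy hz
  rw [Sum.inl.injEq, Fin.ext_iff]
  fin_cases a <;> simp_all

lemma exists_odd_of_three_adj (hm : Odd m) (hm5 : 5 ≤ m) {v x y z : Fin m ⊕ Fin 2}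
    (hxy : x ≠ y) (hxz : x ≠ z) (hyz : y ≠ z)
    (hx : (G' m).Adj v x) (hy : (G' m).Adj v y) (hz : (G' m).Adj v z) :
    ∃ j : Fin m, v = .inl j ∧ (j : ℕ) % 2 = 1 := by
  rcases v with j | a
  · refine ⟨j, rfl, ?_⟩
    have := Nat.odd_iff.mp hm
    rcases x with x | x <;> rcases y with y | y <;> rcases z with z | z <;>
      simp only [adj_inl_inl, adj_inl_inr, ne_eq, Sum.inl.injEq, Sum.inr.injEq, Fin.ext_iff,
        reduceCtorEq, not_false_eq_true] at * <;>
      omega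
  · exact absurd (eq_of_adj_inr hx hy) hxy

lemma add_two_of_adj_even {j j₁ j₂ : Fin m} (hj : (j : ℕ) % 2 = 0) (hne : j₁ ≠ j₂)
    (h₁ : (G' m).Adj (.inl j) (.inl j₁)) (h₂ : (G' m).Adj (.inl j) (.inl j₂)) :
    (j₁ : ℕ) + 2 = j₂ ∨ (j₂ : ℕ) + 2 = j₁ := by
  rw [adj_inl_inl] at h₁ h₂
  have := Fin.val_ne_of_ne hne
  omega

lemma exists_odd_ne {n : ℕ} (hn : 8 ≤ n) (a b c : Fin n) :
    ∃ o : Fin n, (o : ℕ) % 2 = 1 ∧ o ≠ a ∧ o ≠ b ∧ o ≠ c := by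
  by_contra! h
  have h1 := h ⟨1, by omega⟩ (by norm_num)
  have h3 := h ⟨3, by omega⟩ (by norm_num)
  have h5 := h ⟨5, by omega⟩ (by norm_num)
  have h7 := h ⟨7, by omega⟩ (by norm_num)
  simp only [ne_eq, Fin.ext_iff] at h1 h3 h5 h7
  omega

variable {n : ℕ} (f : G' n ↪g G' m)

lemma val_ne_of_image {x y : Fin n} {j k : Fin m} (hx : f (.inl x) = .inl j)
    (hy : f (.inl y) = .inl k) (hxy : (x : ℕ) ≠ y) : (j : ℕ) ≠ k := fun h =>
  hxy (Fin.val_eq_of_eq (Sum.inl_injective (f.injective (hx.trans (Fin.ext h ▸ hy.symm)))))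

lemma image_inl_odd (hn : 8 ≤ n) (hm : Odd m) (hm5 : 5 ≤ m) {i : Fin n} (hi : (i : ℕ) % 2 = 1) :
    ∃ j : Fin m, f (.inl i) = .inl j ∧ (j : ℕ) % 2 = 1 := by
  obtain ⟨o₁, ho₁, h₁, -⟩ := exists_odd_ne hn i i i
  obtain ⟨o₂, ho₂, h₂i, h₂₁, -⟩ := exists_odd_ne hn i o₁ o₁
  obtain ⟨o₃, ho₃, h₃i, h₃₁, h₃₂⟩ := exists_odd_ne hn i o₁ o₂
  have hadj {o : Fin n} (ho : (o : ℕ) % 2 = 1) (hoi : o ≠ i) :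
      (G' m).Adj (f (.inl i)) (f (.inl o)) :=
    f.map_rel_iff.2 (adj_inl_of_odd (Ne.symm hoi) hi ho)
  have hne {o o' : Fin n} (h : o ≠ o') : f (.inl o) ≠ f (.inl o') :=
    f.injective.ne (Sum.inl_injective.ne h)
  exact exists_odd_of_three_adj hm hm5 (hne h₂₁.symm) (hne h₃₁.symm) (hne h₃₂.symm)
    (hadj ho₁ h₁) (hadj ho₂ h₂i) (hadj ho₃ h₃i)

/-- The even vertex between `u` and `w` cannot go to a pendant (it has two neighbours) nor to the
clique (it would see the image of a third odd vertex), so it goes to an even path vertex. -/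
lemma image_add_two (hn : 8 ≤ n) (hm : Odd m) (hm5 : 5 ≤ m) {u w : Fin n}
    (hu : (u : ℕ) % 2 = 1) (huw : (u : ℕ) + 2 = w) {j₁ j₂ : Fin m}
    (h₁ : f (.inl u) = .inl j₁) (h₂ : f (.inl w) = .inl j₂) :
    (j₁ : ℕ) + 2 = j₂ ∨ (j₂ : ℕ) + 2 = j₁ := by
  let v : Fin n := ⟨u + 1, by omega⟩
  have hvu : (G' m).Adj (f (.inl v)) (.inl j₁) :=
    h₁ ▸ f.map_rel_iff.2 (adj_inl_inl.2 ⟨by simp [v], .inl (.inr rfl)⟩)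
  have hvw : (G' m).Adj (f (.inl v)) (.inl j₂) :=
    h₂ ▸ f.map_rel_iff.2 (adj_inl_inl.2 ⟨by simp [v]; omega, .inl (.inl (by simp [v]; omega))⟩)
  have hj : j₁ ≠ j₂ := Fin.ne_of_val_ne (val_ne_of_image f h₁ h₂ (by omega))
  rcases hfv : f (.inl v) with k | a
  · rw [hfv] at hvu hvw
    refine add_two_of_adj_even ?_ hj hvu hvw
    by_contra hk
    obtain ⟨o, ho, hou, how, hov⟩ := exists_odd_ne hn u w v
    obtain ⟨q, hq, hqo⟩ := image_inl_odd f hn hm hm5 ho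
    have hqk : q ≠ k := by
      rintro rfl
      exact hov (Sum.inl_injective (f.injective (hq.trans hfv.symm)))
    have hvo := f.map_rel_iff.1 (hfv ▸ hq ▸ adj_inl_of_odd hqk.symm (by omega) hqo)
    simp only [adj_inl_inl, v, ne_eq, Fin.ext_iff] at hvo hou how
    omega
  · rw [hfv] at hvu hvw
    exact absurd (Sum.inl_injective (eq_of_adj_inr hvu hvw)) hj

lemma image_dist_le (hn : 8 ≤ n) (hm : Odd m) (hm5 : 5 ≤ m) {u w : Fin n}
    (hu : (u : ℕ) % 2 = 1) (hw : (w : ℕ) % 2 = 1) (huw : (u : ℕ) ≤ w) {j₁ j₂ : Fin m}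
    (h₁ : f (.inl u) = .inl j₁) (h₂ : f (.inl w) = .inl j₂) :
    (j₂ : ℕ) ≤ j₁ + (w - u) ∧ (j₁ : ℕ) ≤ j₂ + (w - u) := by
  suffices ∀ k : ℕ, ∀ w : Fin n, (w : ℕ) = u + 2 * k → ∀ j₂ : Fin m, f (.inl w) = .inl j₂ →
      (j₂ : ℕ) ≤ j₁ + 2 * k ∧ (j₁ : ℕ) ≤ j₂ + 2 * k by
    obtain ⟨k, hk⟩ : ∃ k, (w : ℕ) = u + 2 * k := ⟨(w - u) / 2, by omega⟩
    have := this k w hk j₂ h₂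
    omega
  intro k
  induction k with
  | zero =>
    intro w hw j₂ h₂
    rw [show w = u from Fin.ext hw, h₁, Sum.inl.inj_iff] at h₂
    omega
  | succ k ih =>
    intro w hw j₂ h₂
    let w' : Fin n := ⟨u + 2 * k, by omega⟩
    obtain ⟨j', hj', -⟩ := image_inl_odd f hn hm hm5 (i := w') (by simp [w']; omega)
    have := ih w' rfl j' hj'
    have := image_add_two f hn hm hm5 (by simp [w']; omega) (by simp [w']; omega) hj' h₂
    omega

/-- The image of a pendant is adjacent to the image of its attachment vertex `t` only, which
excludes both the clique (it contains the image of another odd vertex) and the even path vertices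
(they are adjacent to the image of `t - 2` or of `t + 2`). -/
lemma image_eq_three_or_eq_sub_four (hn : 8 ≤ n) (hm : Odd m) (hm5 : 5 ≤ m)
    {a : Fin 2} {t : Fin n}
    (hat : (G' n).Adj (.inr a) (.inl t)) (ht : (t : ℕ) % 2 = 1) (ht3 : 3 ≤ (t : ℕ))
    (htn : (t : ℕ) + 2 < n) {j : Fin m} (hj : f (.inl t) = .inl j) :
    (j : ℕ) = 3 ∨ (j : ℕ) = m - 4 := by
  have hfa : (G' m).Adj (f (.inr a)) (.inl j) := hj ▸ f.map_rel_iff.2 hat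
  have hnot {s : Fin n} (hs : s ≠ t) {k : Fin m} (hk : f (.inl s) = .inl k) :
      ¬ (G' m).Adj (f (.inr a)) (.inl k) := fun h =>
    hs (Sum.inl_injective (eq_of_adj_inr (f.map_rel_iff.1 (hk ▸ h)) hat))
  rcases hfa' : f (.inr a) with q | b
  · rw [hfa'] at hfa hnot
    exfalso
    by_cases hq : (q : ℕ) % 2 = 1
    · obtain ⟨o, ho, hot, -⟩ := exists_odd_ne hn t t t
      obtain ⟨k, hk, hko⟩ := image_inl_odd f hn hm hm5 ho
      have hqk : q ≠ k := by
        rintro rfl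
        exact Sum.inl_ne_inr (f.injective (hk.trans hfa'.symm))
      exact hnot hot hk (adj_inl_of_odd hqk hq hko)
    · let t₁ : Fin n := ⟨t - 2, by omega⟩
      let t₂ : Fin n := ⟨t + 2, htn⟩
      obtain ⟨k₁, hk₁, -⟩ := image_inl_odd f hn hm hm5 (i := t₁) (by simp [t₁]; omega)
      obtain ⟨k₂, hk₂, -⟩ := image_inl_odd f hn hm hm5 (i := t₂) (by simp [t₂]; omega)
      have h₁ := image_add_two f hn hm hm5 (by simp [t₁]; omega) (by simp [t₁]; omega) hk₁ hj
      have h₂ := image_add_two f hn hm hm5 ht rfl hj hk₂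
      have hk := val_ne_of_image f hk₁ hk₂ (by simp [t₁, t₂]; omega)
      have hn₁ := hnot (s := t₁) (fun h => by simp [t₁, Fin.ext_iff] at h; omega) hk₁
      have hn₂ := hnot (s := t₂) (fun h => by simp [t₂, Fin.ext_iff] at h) hk₂
      simp only [adj_inl_inl] at hfa hn₁ hn₂
      omega
  · rw [hfa'] at hfa
    simp only [adj_inr_inl] at hfa
    omega

end G'

/-- the graphs `G'_n`, `n ≥ 9` odd, form an infinite antichain in the
induced-subgraph order. -/
theorem stmt18 (n m : ℕ) (hn : 9 ≤ n) (hno : Odd n) (hmo : Odd m) (hm : n < m) :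
    ¬ Nonempty (G' n ↪g G' m) := by
  rintro ⟨f⟩
  have hn2 := Nat.odd_iff.mp hno
  let s : Fin n := ⟨3, by omega⟩
  let t : Fin n := ⟨n - 4, by omega⟩
  have hs : (s : ℕ) % 2 = 1 := by simp [s]
  have ht : (t : ℕ) % 2 = 1 := by simp [t]; omega
  obtain ⟨j, hj, -⟩ := G'.image_inl_odd f (by omega) hmo (by omega) hs
  obtain ⟨k, hk, -⟩ := G'.image_inl_odd f (by omega) hmo (by omega) ht
  have hj' := G'.image_eq_three_or_eq_sub_four f (by omega) hmo (by omega) (a := 0)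
    (by simp [s]) hs le_rfl (by simp [s]; omega) hj
  have hk' := G'.image_eq_three_or_eq_sub_four f (by omega) hmo (by omega) (a := 1)
    (by simp [t]) ht (by simp [t]; omega) (by simp [t]; omega) hk
  have hjk := G'.val_ne_of_image f hj hk (by simp [s, t]; omega)
  have := G'.image_dist_le f (by omega) hmo (by omega) hs ht (by simp [s, t]; omega) hj hk
  simp only [s, t] at this
  omega
end
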